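/- arXiv:0709.3953 — 3 statements merged into one kernel-verified Lean document; each statement's English description precedes it below -/
import Mathlib

section
/- For nonnegative integers a_1,...,a_m with a_1+...+a_m < m, the sum of (|I|-1)!·(m-|I|)! over all nonempty subsets I of {1,...,m} satisfying sum_{i in I} a_i = |I|-1 equals m!. -/
/-!
Order the indices and walk with steps `a i - 1`. The steps are at least `-1` and the total is
negative, so the walk reaches `-1`, for the first time right after a prefix `I` with
`∑ i ∈ I, a i = |I| - 1`. By the hitting time theorem exactly `(|I| - 1)! * (m - |I|)!` orderings
do this with prefix `I`, so the sum counts all `m!` orderings. For the induction we aim at a level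
`-d` instead of `-1`: after the first step `x` the remaining walk has to descend `d + a x - 1`.
-/

open Finset

open scoped Nat

theorem Finset.sum_sum_powerset_erase {α β : Type*} [DecidableEq α] [AddCommMonoid β]
    (N : Finset α) (f : α → Finset α → β) :
    ∑ x ∈ N, ∑ J ∈ (N.erase x).powerset, f x J = ∑ K ∈ N.powerset, ∑ x ∈ K, f x (K.erase x) := by
  rw [sum_sigma', sum_sigma']
  refine sum_bij' (fun p _ => ⟨insert p.1 p.2, p.1⟩) (fun q _ => ⟨q.2, q.1.erase q.2⟩)
    ?_ ?_ ?_ ?_ ?_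
  · rintro ⟨x, J⟩ h
    simp only [mem_sigma, mem_powerset, subset_erase] at h ⊢
    exact ⟨insert_subset h.1 h.2.1, mem_insert_self x J⟩
  · rintro ⟨K, x⟩ h
    simp only [mem_sigma, mem_powerset] at h ⊢
    exact ⟨h.1 h.2, erase_subset_erase x h.1⟩
  · rintro ⟨x, J⟩ h
    simp only [mem_sigma, mem_powerset, subset_erase] at h
    simp [erase_insert h.2.2]
  · rintro ⟨K, x⟩ h
    simp only [mem_sigma] at h
    simp [insert_erase h.2]
  · rintro ⟨x, J⟩ h
    simp only [mem_sigma, mem_powerset, subset_erase] at h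
    simp [erase_insert h.2.2]

section FirstPassage

variable {α : Type*} [DecidableEq α] (a : α → ℕ)

def firstPassageWeight (d : ℕ) (J : Finset α) : ℕ :=
  (if J = ∅ then 1 else d) * (J.card - 1)!

/-- By the hitting time theorem, the summand for `J` is the number of orderings of `M` along which
the partial sums of `a x - 1` first reach `-d` right after the elements of `J` (for `d = 0`: at
the start, `J = ∅`). -/
def firstPassageCount (d : ℕ) (M : Finset α) : ℕ :=
  ∑ J ∈ M.powerset.filter (fun J => ∑ i ∈ J, a i + d = J.card),
    firstPassageWeight d J * (M.card - J.card)!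

theorem firstPassageCount_zero (M : Finset α) : firstPassageCount a 0 M = M.card ! := by
  unfold firstPassageCount
  rw [sum_eq_single ∅]
  · simp [firstPassageWeight]
  · intro J _ hJ
    simp [firstPassageWeight, hJ]
  · simp

theorem sum_firstPassageWeight_erase {d : ℕ} (hd : 0 < d) {K : Finset α}
    (hK : ∑ i ∈ K, a i + d = K.card) :
    ∑ x ∈ K, firstPassageWeight (d + a x - 1) (K.erase x) = firstPassageWeight d K := by
  obtain hK1 | hK2 : K.card = 1 ∨ 2 ≤ K.card := by omega
  · obtain ⟨x, rfl⟩ := card_eq_one.mp hK1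
    simp [firstPassageWeight] at hK ⊢
    omega
  have hK0 : K ≠ ∅ := by rintro rfl; simp at hK2
  have hweight : ∀ x ∈ K, firstPassageWeight (d + a x - 1) (K.erase x) =
      (d + a x - 1) * (K.card - 2)! := by
    intro x hx
    have hcard := card_erase_add_one hx
    have hx0 : K.erase x ≠ ∅ := by rintro h; rw [h, card_empty] at hcard; omega
    rw [firstPassageWeight, if_neg hx0, show (K.erase x).card - 1 = K.card - 2 by omega]
  have hsum : ∑ x ∈ K, (d + a x - 1) = (K.card - 1) * d := by
    rw [sum_congr rfl fun x _ => (Nat.sub_add_comm hd : d + a x - 1 = d - 1 + a x),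
      sum_add_distrib, sum_const, smul_eq_mul]
    have h1 : 1 ≤ K.card := by omega
    zify [hd, h1] at hK ⊢
    linear_combination hK
  rw [sum_congr rfl hweight, ← sum_mul, hsum, firstPassageWeight, if_neg hK0,
    ← Nat.mul_factorial_pred (by omega : K.card - 1 ≠ 0), show K.card - 1 - 1 = K.card - 2 by omega]
  ring

theorem firstPassageCount_eq_sum_erase {d : ℕ} (hd : 0 < d) (N : Finset α) :
    firstPassageCount a d N = ∑ x ∈ N, firstPassageCount a (d + a x - 1) (N.erase x) := by
  have hadmissible : ∀ {K x}, x ∈ K → (∑ i ∈ K.erase x, a i + (d + a x - 1) = (K.erase x).card ↔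
      ∑ i ∈ K, a i + d = K.card) := fun hx => by
    have hsum := add_sum_erase _ a hx
    have hcard := card_erase_add_one hx
    omega
  have hstep : ∀ x ∈ N, firstPassageCount a (d + a x - 1) (N.erase x) =
      ∑ J ∈ (N.erase x).powerset, if ∑ i ∈ J, a i + (d + a x - 1) = J.card then
        firstPassageWeight (d + a x - 1) J * (N.card - 1 - J.card)! else 0 := by
    intro x hx
    rw [firstPassageCount, sum_filter, card_erase_of_mem hx]
  rw [sum_congr rfl hstep, sum_sum_powerset_erase, firstPassageCount, sum_filter]
  refine sum_congr rfl fun K _ => ?_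
  by_cases hK : ∑ i ∈ K, a i + d = K.card
  · rw [if_pos hK, ← sum_firstPassageWeight_erase a hd hK, sum_mul]
    refine sum_congr rfl fun x hx => ?_
    rw [if_pos ((hadmissible hx).mpr hK), card_erase_of_mem hx,
      show N.card - 1 - (K.card - 1) = N.card - K.card by omega]
  · rw [if_neg hK]
    exact (sum_eq_zero fun x hx => if_neg (mt (hadmissible hx).mp hK)).symm

theorem firstPassageCount_eq_factorial (N : Finset α) (d : ℕ) (h : ∑ i ∈ N, a i + d ≤ N.card) :
    firstPassageCount a d N = N.card ! := by
  induction N using Finset.strongInduction generalizing d with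
  | H N ih =>
    obtain rfl | hd := Nat.eq_zero_or_pos d
    · exact firstPassageCount_zero a N
    have hstep : ∀ x ∈ N, firstPassageCount a (d + a x - 1) (N.erase x) = (N.card - 1)! := by
      intro x hx
      rw [← card_erase_of_mem hx]
      refine ih _ (erase_ssubset hx) _ ?_
      have hsum := add_sum_erase N a hx
      have hcard := card_erase_add_one hx
      omega
    rw [firstPassageCount_eq_sum_erase a hd, sum_congr rfl hstep, sum_const, smul_eq_mul,
      Nat.mul_factorial_pred (by omega)]

end FirstPassage

theorem sum_factorials_over_admissible_subsets_general (m : ℕ) (a : Fin m → ℕ)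
    (ha : ∑ i, a i < m) :
    ∑ I ∈ (Finset.univ : Finset (Fin m)).powerset.filter
        (fun I => I.Nonempty ∧ (∑ i ∈ I, a i) + 1 = I.card),
      (I.card - 1).factorial * (m - I.card).factorial = m.factorial := by
  have h := firstPassageCount_eq_factorial a univ 1 (by simpa using ha)
  rw [card_univ, Fintype.card_fin] at h
  rw [← h, firstPassageCount, card_univ, Fintype.card_fin]
  refine sum_congr (filter_congr fun I _ => ?_) fun I _ => by simp [firstPassageWeight]
  exact and_iff_right_of_imp fun hI => card_pos.mp (by omega)

theorem sum_factorials_over_admissible_subsets (m : ℕ) (hm : 0 < m) (a : Fin m → ℕ)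
    (ha : ∑ i, a i < m) :
    ∑ I ∈ (Finset.univ : Finset (Fin m)).powerset.filter
        (fun I => I.Nonempty ∧ (∑ i ∈ I, a i) + 1 = I.card),
      (I.card - 1).factorial * (m - I.card).factorial = m.factorial :=
  sum_factorials_over_admissible_subsets_general m a ha
end

section
/- Let k_1,...,k_m be nonnegative integers and K an integer (with K ≥ sum of the k_i, or treating everything in a polynomial ring). Then sum over nonempty subsets I of [m] of K(I)^{[|I|-1]} · (K - K(I))^{[m-|I|]} equals m·K^{[m-1]}, where K(I)= sum_{i in I} k_i and x^{[p]} is the falling factorial. -/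
open Finset

/-- Falling factorial power `x^{[p]} = x(x-1)⋯(x-p+1)` for an integer `x`. -/
def fall (x : ℤ) (p : ℕ) : ℤ := ∏ i ∈ Finset.range p, (x - i)

/-!
Write `F_s(K)` for the left-hand side over a finite index set `s`. Since
`x^{[n]} - (x-1)^{[n]} = n (x-1)^{[n-1]}`, the backward difference of `F_s` in `K` is
`∑_{j ∈ s} F_{s \ {j}}(K - 1)` (each nonempty `I ⊆ s` is counted once for every `j ∈ s \ I`),
which by induction on `|s|` is the backward difference of `|s| K^{[|s|-1]}`. It remains to compare
the two sides at `K = -1`. There `(-1-a)^{[q]} = (-1)^q (a+q)^{[q]}` merges with `a^{[c-1]}` into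
`(-1)^q (a - c + |s|)^{[|s|-1]}`, a polynomial of degree `|s| - 1` in `a - c = ∑_{i ∈ I} (k_i - 1)`;
its alternating sum over all `I ⊆ s` vanishes, so only the missing term `I = ∅` survives.
-/

open Polynomial

section MixedDifference

variable {R : Type*} [CommRing R]

theorem Polynomial.degree_sub_taylor_lt {f : R[X]} {n : ℕ} (r : R) (hf : f.degree < n + 1) :
    (f - taylor r f).degree < n := by
  rcases eq_or_ne f 0 with rfl | hf0
  · simp
  calc (f - taylor r f).degree < f.degree :=
        degree_sub_lt_left (degree_taylor f r).symm hf0 (leadingCoeff_taylor r f).symm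
    _ ≤ n := Order.le_of_lt_succ hf

theorem Finset.sum_powerset_neg_one_pow_mul_eval_eq_zero {ι : Type*} [DecidableEq ι]
    (s : Finset ι) (b : ι → R) {f : R[X]} (hf : f.degree < #s) :
    ∑ t ∈ s.powerset, (-1) ^ #t * f.eval (∑ i ∈ t, b i) = 0 := by
  induction s using Finset.induction_on generalizing f with
  | empty => simp_all
  | @insert j s hj ih =>
    rw [card_insert_of_notMem hj, Nat.cast_add, Nat.cast_one] at hf
    rw [sum_powerset_insert hj, ← ih (degree_sub_taylor_lt (b j) hf), ← sum_add_distrib]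
    refine sum_congr rfl fun t ht => ?_
    have hjt : j ∉ t := fun h => hj (mem_powerset.mp ht h)
    rw [card_insert_of_notMem hjt, sum_insert hjt, eval_sub, taylor_eval, add_comm (b j)]
    ring

end MixedDifference

theorem fall_eq_eval_descPochhammer (x : ℤ) (p : ℕ) : fall x p = (descPochhammer ℤ p).eval x :=
  (descPochhammer_eval_eq_prod_range p x).symm

theorem fall_natCast (n p : ℕ) : fall n p = n.descFactorial p := by
  rw [fall_eq_eval_descPochhammer, descPochhammer_eval_eq_descFactorial]

theorem fall_add (x : ℤ) (p q : ℕ) : fall x (p + q) = fall x p * fall (x - p) q := by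
  rw [fall, prod_range_add]
  congr 1
  exact prod_congr rfl fun i _ => by push_cast; ring

theorem fall_neg (x : ℤ) (q : ℕ) : fall (-x) q = (-1) ^ q * fall (x + q - 1) q := by
  rw [fall_eq_eval_descPochhammer, fall_eq_eval_descPochhammer, descPochhammer_eval_eq_ascPochhammer,
    ← ascPochhammer_eval_neg_eq_descPochhammer]
  ring_nf

theorem fall_sub_fall_sub_one (x : ℤ) (n : ℕ) :
    fall x n - fall (x - 1) n = n * fall (x - 1) (n - 1) := by
  cases n with
  | zero => simp [fall]
  | succ n =>
    rw [add_comm n 1, fall_add, add_comm 1 n, fall_add, Nat.add_sub_cancel]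
    simp only [fall, range_one, prod_singleton]
    push_cast
    ring

theorem fall_mul_fall_neg_one_sub (a : ℤ) {c n : ℕ} (hc : 0 < c) (hcn : c ≤ n) :
    fall a (c - 1) * fall (-1 - a) (n - c) = (-1) ^ n * ((-1) ^ c * fall (a - c + n) (n - 1)) := by
  have hsign : (-1 : ℤ) ^ (n - c) = (-1) ^ n * (-1) ^ c := by
    rw [← pow_add]
    simp [show n + c = n - c + 2 * c by omega, pow_add]
  rw [show -1 - a = -(a + 1) by ring, fall_neg, ← mul_assoc ((-1) ^ n), ← hsign, mul_left_comm,
    show n - 1 = (n - c) + (c - 1) by omega, fall_add, mul_comm (fall _ (n - c))]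
  push_cast [hcn]
  ring_nf

theorem Finset.sum_filter_powerset_sum_sdiff {ι M : Type*} [DecidableEq ι] [AddCommMonoid M]
    (s : Finset ι) (p : Finset ι → Prop) [DecidablePred p] (g : Finset ι → ι → M) :
    ∑ t ∈ s.powerset.filter p, ∑ j ∈ s \ t, g t j =
      ∑ j ∈ s, ∑ t ∈ (s.erase j).powerset.filter p, g t j := by
  refine sum_comm' fun t j => ?_
  simp only [mem_filter, mem_powerset, mem_sdiff, subset_erase]
  tauto

section SubsetFallSum

variable {ι : Type*} [DecidableEq ι]

def subsetFallSum (s : Finset ι) (k : ι → ℤ) (K : ℤ) : ℤ :=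
  ∑ t ∈ s.powerset.filter (fun t => t.Nonempty),
    fall (∑ i ∈ t, k i) (#t - 1) * fall (K - ∑ i ∈ t, k i) (#s - #t)

theorem subsetFallSum_sub_subsetFallSum_sub_one (s : Finset ι) (k : ι → ℤ) (K : ℤ) :
    subsetFallSum s k K - subsetFallSum s k (K - 1) =
      ∑ j ∈ s, subsetFallSum (s.erase j) k (K - 1) := by
  calc subsetFallSum s k K - subsetFallSum s k (K - 1)
      = ∑ t ∈ s.powerset.filter (fun t => t.Nonempty), ∑ j ∈ s \ t,
          fall (∑ i ∈ t, k i) (#t - 1) * fall (K - 1 - ∑ i ∈ t, k i) (#(s.erase j) - #t) := by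
        rw [subsetFallSum, subsetFallSum, ← sum_sub_distrib]
        refine sum_congr rfl fun t ht => ?_
        have hts : t ⊆ s := mem_powerset.mp (mem_filter.mp ht).1
        have hcard : ∀ j ∈ s \ t, #(s.erase j) - #t = #s - #t - 1 := fun j hj => by
          rw [card_erase_of_mem (mem_sdiff.mp hj).1]; omega
        rw [sum_eq_card_nsmul (s := s \ t) fun j hj => by rw [hcard j hj],
          card_sdiff_of_subset hts, nsmul_eq_mul, ← mul_sub, sub_right_comm, fall_sub_fall_sub_one]
        ring
    _ = ∑ j ∈ s, subsetFallSum (s.erase j) k (K - 1) :=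
        sum_filter_powerset_sum_sdiff s _ _

theorem subsetFallSum_neg_one (s : Finset ι) (k : ι → ℤ) (hs : s.Nonempty) :
    subsetFallSum s k (-1) = #s * fall (-1) (#s - 1) := by
  set n := #s
  set P : ℤ[X] := taylor (n : ℤ) (descPochhammer ℤ (n - 1))
  have hP : ∀ u, P.eval u = fall (u + n) (n - 1) := fun u => by
    rw [taylor_eval, fall_eq_eval_descPochhammer]
  have hPdeg : P.degree < n := by
    calc P.degree ≤ P.natDegree := degree_le_natDegree
      _ < n := by
        rw [natDegree_taylor, descPochhammer_natDegree]
        exact_mod_cast Nat.sub_lt (card_pos.mpr hs) one_pos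
  have hterm : ∀ t ∈ s.powerset.filter (fun t => t.Nonempty),
      fall (∑ i ∈ t, k i) (#t - 1) * fall (-1 - ∑ i ∈ t, k i) (n - #t) =
        (-1) ^ n * ((-1) ^ #t * P.eval (∑ i ∈ t, (k i - 1))) := fun t ht => by
    obtain ⟨hts, htne⟩ := mem_filter.mp ht
    rw [fall_mul_fall_neg_one_sub _ (card_pos.mpr htne) (card_le_card (mem_powerset.mp hts)), hP,
      sum_sub_distrib, sum_const, nsmul_one]
  have hempty : s.powerset.filter (fun t => ¬ t.Nonempty) = {∅} := by
    ext t
    simp only [mem_filter, mem_powerset, not_nonempty_iff_eq_empty, mem_singleton]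
    exact ⟨And.right, fun ht => ⟨ht ▸ empty_subset s, ht⟩⟩
  have hvanish := sum_powerset_neg_one_pow_mul_eval_eq_zero s (fun i => k i - 1) hPdeg
  rw [← sum_filter_add_sum_filter_not _ (fun t => t.Nonempty), hempty, sum_singleton] at hvanish
  obtain ⟨q, hq⟩ : ∃ q, n = q + 1 := Nat.exists_eq_add_one.mpr (card_pos.mpr hs)
  rw [subsetFallSum, sum_congr rfl hterm, ← mul_sum, eq_neg_of_add_eq_zero_left hvanish, fall_neg]
  simp only [card_empty, pow_zero, sum_empty, hP, one_mul, zero_add, hq, Nat.add_sub_cancel]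
  have hfact : fall ((q + 1 : ℕ) : ℤ) q = (q + 1 : ℕ) * fall q q := by
    rw [fall_natCast, fall_natCast, ← Nat.cast_mul, ← Nat.succ_descFactorial,
      Nat.add_sub_cancel_left, one_mul]
  rw [hfact, add_sub_cancel_left, pow_succ]
  ring

theorem subsetFallSum_eq (s : Finset ι) (k : ι → ℤ) (K : ℤ) :
    subsetFallSum s k K = #s * fall K (#s - 1) := by
  induction s using Finset.strongInduction generalizing K with
  | H s ih =>
    rcases s.eq_empty_or_nonempty with rfl | hs
    · simp [subsetFallSum, filter_singleton]
    set n := #s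
    have hstep : ∀ K, subsetFallSum s k K - subsetFallSum s k (K - 1) =
        n * fall K (n - 1) - n * fall (K - 1) (n - 1) := fun K => by
      have hcard : ∀ j ∈ s, #(s.erase j) = n - 1 := fun j hj => card_erase_of_mem hj
      rw [subsetFallSum_sub_subsetFallSum_sub_one, ← mul_sub, fall_sub_fall_sub_one,
        sum_eq_card_nsmul fun j hj => by rw [ih _ (erase_ssubset hj), hcard j hj], nsmul_eq_mul]
    have hperiodic : Function.Periodic (fun K => subsetFallSum s k K - n * fall K (n - 1)) 1 :=
      fun K => by linarith [add_sub_cancel_right K 1 ▸ hstep (K + 1)]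
    have h := hperiodic.sub_int_mul_eq (x := K) (K + 1)
    rw [Int.cast_id, mul_one, sub_add_cancel_left, subsetFallSum_neg_one s k hs, sub_self] at h
    exact sub_eq_zero.mp h.symm

end SubsetFallSum

theorem falling_subset_identity (m : ℕ) (k : Fin m → ℕ) (K : ℤ) :
    ∑ I ∈ (Finset.univ : Finset (Fin m)).powerset.filter (fun I => I.Nonempty),
        fall (∑ i ∈ I, (k i : ℤ)) (I.card - 1) * fall (K - ∑ i ∈ I, (k i : ℤ)) (m - I.card)
      = m * fall K (m - 1) := by
  simpa [subsetFallSum] using subsetFallSum_eq univ (fun i => (k i : ℤ)) K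
end

section
/- Fix k ∈ [n] and let V_k = { v_I : I ⊆ [n]∖{k}, |I|=2 }, where (v_I)_S = 1 if |I∩S|=1, else 0, for S a 2-element subset of [n]. Then the images of the vectors in V_k under the quotient map ℝ^T → Q_n = ℝ^T/im(Φ_n) span Q_n. -/
open Finset

noncomputable def Phi (n : ℕ) :
    (Fin n → ℝ) →ₗ[ℝ] ({S : Finset (Fin n) // S.card = 2} → ℝ) :=
  LinearMap.pi fun S => ∑ i ∈ S.1, LinearMap.proj i

def v (n : ℕ) (I : Finset (Fin n)) : {S : Finset (Fin n) // S.card = 2} → ℝ :=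
  fun S => if (I ∩ S.1).card = 1 then 1 else 0

/-!
Let `W = im Φ + span V_k` and write `e_S` for the unit vectors of `ℝ^T`. Since
`Φ(1_S) = v_S + 2 e_S`, every `e_S` with `k ∉ S` lies in `W`. For `S = {k, a}` the vector
`Φ(e_a)` is `e_S` plus unit vectors of pairs through `a` that avoid `k`, so `e_S ∈ W` as well;
hence `W = ℝ^T`.
-/

theorem Submodule.mem_of_single_mem_of_eq_zero {R ι : Type*} [Semiring R] [Fintype ι]
    [DecidableEq ι] {W : Submodule R (ι → R)} {P : ι → Prop}
    (hW : ∀ i, P i → Pi.single i 1 ∈ W) {u : ι → R} (hu : ∀ i, ¬P i → u i = 0) :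
    u ∈ W := by
  rw [← Finset.univ_sum_single u]
  refine W.sum_mem fun i _ => ?_
  by_cases hi : P i
  · simpa [← Pi.single_smul'] using W.smul_mem (u i) (hW i hi)
  · simp [hu i hi]

theorem Finset.eq_pair_of_mem {α : Type*} [DecidableEq α] {S : Finset α} (hS : S.card = 2)
    {a b : α} (hab : a ≠ b) (ha : a ∈ S) (hb : b ∈ S) : S = {a, b} :=
  (eq_of_subset_of_card_le (insert_subset ha (singleton_subset_iff.2 hb))
    (by rw [hS, card_pair hab])).symm

abbrev Pairs (n : ℕ) := {S : Finset (Fin n) // S.card = 2}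

variable {n : ℕ}

theorem Phi_apply (a : Fin n → ℝ) (S : Pairs n) : Phi n a S = ∑ i ∈ S.1, a i := by
  simp [Phi]

theorem Phi_single_apply (a : Fin n) (S : Pairs n) :
    Phi n (Pi.single a 1) S = if a ∈ S.1 then 1 else 0 := by
  rw [Phi_apply, sum_pi_single']

theorem Phi_indicator (S : Pairs n) :
    Phi n (fun i => if i ∈ S.1 then 1 else 0) = v n S.1 + (2 : ℝ) • Pi.single S 1 := by
  funext S'
  have hle : (S.1 ∩ S'.1).card ≤ 2 := (card_le_card inter_subset_left).trans_eq S.2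
  have hcard : (S.1 ∩ S'.1).card = 2 → S' = S := fun h => Subtype.ext <|
    (eq_of_subset_of_card_le inter_subset_right (by rw [S'.2, h])).symm.trans
      (eq_of_subset_of_card_le inter_subset_left (by rw [S.2, h]))
  rw [Phi_apply, sum_boole, filter_mem_eq_inter, inter_comm]
  simp only [v, Pi.add_apply, Pi.smul_apply, Pi.single_apply, smul_eq_mul]
  by_cases h : S' = S
  · simp [h, S.2]
  · interval_cases hc : (S.1 ∩ S'.1).card <;> simp_all

theorem single_mem_of_v_mem {W : Submodule ℝ (Pairs n → ℝ)}
    (hPhi : LinearMap.range (Phi n) ≤ W) {S : Pairs n} (hv : v n S.1 ∈ W) :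
    Pi.single S 1 ∈ W := by
  have hsingle : Pi.single S 1 =
      (2⁻¹ : ℝ) • (Phi n (fun i => if i ∈ S.1 then 1 else 0) - v n S.1) := by
    rw [Phi_indicator, add_sub_cancel_left, smul_smul]
    norm_num
  rw [hsingle]
  exact W.smul_mem _ (W.sub_mem (hPhi ⟨_, rfl⟩) hv)

theorem single_mem_of_forall_not_mem {W : Submodule ℝ (Pairs n → ℝ)}
    (hPhi : LinearMap.range (Phi n) ≤ W) {k : Fin n}
    (hW : ∀ S : Pairs n, k ∉ S.1 → Pi.single S 1 ∈ W) (S : Pairs n) :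
    Pi.single S 1 ∈ W := by
  by_cases hk : k ∈ S.1
  swap
  · exact hW S hk
  obtain ⟨a, ha, hak⟩ := exists_mem_ne (S.2 ▸ one_lt_two) k
  have hrest : Phi n (Pi.single a 1) - Pi.single S 1 ∈ W := by
    refine W.mem_of_single_mem_of_eq_zero hW fun S' hkS' => ?_
    rw [not_not] at hkS'
    by_cases h : S' = S
    · simp [h, Phi_single_apply, ha]
    · have haS' : a ∉ S'.1 := fun haS' => h <| Subtype.ext <|
        (eq_pair_of_mem S'.2 hak.symm hkS' haS').trans (eq_pair_of_mem S.2 hak.symm hk ha).symm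
      simp [Phi_single_apply, haS', h]
  simpa using W.sub_mem (hPhi ⟨Pi.single a 1, rfl⟩) hrest

theorem range_Phi_sup_span_v_eq_top (k : Fin n) :
    LinearMap.range (Phi n) ⊔ Submodule.span ℝ (v n '' {S | S.card = 2 ∧ k ∉ S}) = ⊤ := by
  set W := LinearMap.range (Phi n) ⊔ Submodule.span ℝ (v n '' {S | S.card = 2 ∧ k ∉ S})
  have hPhi : LinearMap.range (Phi n) ≤ W := le_sup_left
  have hsingle : ∀ S : Pairs n, Pi.single S 1 ∈ W :=
    single_mem_of_forall_not_mem hPhi fun S hk => single_mem_of_v_mem hPhi <|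
      Submodule.mem_sup_right (Submodule.subset_span ⟨S.1, ⟨S.2, hk⟩, rfl⟩)
  exact Submodule.eq_top_iff'.2 fun _ =>
    W.mem_of_single_mem_of_eq_zero (P := fun _ => True) (fun S _ => hsingle S)
      fun _ h => (h trivial).elim

theorem Vk_spans_general (n : ℕ) (k : Fin n) :
    Submodule.span ℝ
      ((fun S : Finset (Fin n) =>
          Submodule.Quotient.mk (p := LinearMap.range (Phi n)) (v n S)) ''
        {S : Finset (Fin n) | S.card = 2 ∧ k ∉ S}) = ⊤ := by
  change Submodule.span ℝ ((LinearMap.range (Phi n)).mkQ ∘ v n '' _) = ⊤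
  rw [Set.image_comp, ← Submodule.map_span, Submodule.map_mkQ_eq_top]
  exact range_Phi_sup_span_v_eq_top k

/-- The images in `Qₙ = ℝ^T / im Φₙ` of the vectors `v_S`, for `S` a two-element
subset of `[n] ∖ {k}`, span `Qₙ`. -/
theorem Vk_spans (n : ℕ) (hn : 4 ≤ n) (k : Fin n) :
    Submodule.span ℝ
      ((fun S : Finset (Fin n) =>
          Submodule.Quotient.mk (p := LinearMap.range (Phi n)) (v n S)) ''
        {S : Finset (Fin n) | S.card = 2 ∧ k ∉ S}) = ⊤ :=
  Vk_spans_general n k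
end
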